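/- Assume that there are two players with preferences ≽^sing_1 and ≽^sing_2 on the single items of a set S of m items. Then there exists a subset T ⊆ S with |T| ≤ ⌈(m+1)/2⌉ such that T is necessarily agreeable with respect to both ≽^sing_1 and ≽^sing_2. -/

import Mathlib

open Finset

/-- A preference on subsets: a complete (total, hence reflexive) and transitive relation. -/
def IsPref {m : ℕ} (R : Finset (Fin m) → Finset (Fin m) → Prop) : Prop :=
  (∀ A B, R A B ∨ R B A) ∧ ∀ A B C, R A B → R B C → R A C

/-- A preference on single items: a complete and transitive relation. -/
def IsSingPref {m : ℕ} (Rs : Fin m → Fin m → Prop) : Prop :=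
  (∀ x y, Rs x y ∨ Rs y x) ∧ ∀ x y z, Rs x y → Rs y z → Rs x z

/-- A preference is monotonic if `T ∪ {x} ≽ T` for every subset `T` and item `x`. -/
def MonotonicPref {m : ℕ} (R : Finset (Fin m) → Finset (Fin m) → Prop) : Prop :=
  ∀ (T : Finset (Fin m)) (x : Fin m), R (insert x T) T

/-- A preference on subsets is responsive w.r.t. a preference `Rs` on single items if it is
monotonic and `(T \ {y}) ∪ {x} ≽ T` whenever `x ∉ T`, `y ∈ T` and `x ≽ˢ y`. -/
def Responsive {m : ℕ} (Rs : Fin m → Fin m → Prop)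
    (R : Finset (Fin m) → Finset (Fin m) → Prop) : Prop :=
  MonotonicPref R ∧
    ∀ (T : Finset (Fin m)) (x y : Fin m),
      x ∉ T → y ∈ T → Rs x y → R (insert x (T.erase y)) T

/-- A preference on subsets is consistent with a preference on single items if its
restriction to singletons agrees with it. -/
def Consistent {m : ℕ} (Rs : Fin m → Fin m → Prop)
    (R : Finset (Fin m) → Finset (Fin m) → Prop) : Prop :=
  ∀ x y : Fin m, R {x} {y} ↔ Rs x y

/-- `T` is necessarily agreeable w.r.t. `Rs` if `T ≽ Tᶜ` for every responsive preference
consistent with `Rs`. -/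
def NecAgreeable {m : ℕ} (Rs : Fin m → Fin m → Prop) (T : Finset (Fin m)) : Prop :=
  ∀ R : Finset (Fin m) → Finset (Fin m) → Prop,
    IsPref R → Responsive Rs R → Consistent Rs R → R T Tᶜ

/-- `T` is possibly agreeable w.r.t. `Rs` if `T ≻ Tᶜ` for some responsive preference
consistent with `Rs`. -/
def PossAgreeable {m : ℕ} (Rs : Fin m → Fin m → Prop) (T : Finset (Fin m)) : Prop :=
  ∃ R : Finset (Fin m) → Finset (Fin m) → Prop,
    IsPref R ∧ Responsive Rs R ∧ Consistent Rs R ∧ R T Tᶜ ∧ ¬ R Tᶜ T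

/-!
Sort the items by the first player's preference, `a₀ ≽₁ a₁ ≽₁ ⋯`, and let `T` consist of `a₀`
and of the item the second player prefers in each of the pairs `{a₁, a₂}, {a₃, a₄}, …` (plus the
last item if it is left unpaired). For the second player every item outside `T` is beaten by its
partner in `T`; for the first player it is beaten by the item of `T` taken from the previous pair
(or by `a₀`). A responsive preference may replace an item of a bundle by a better one, so either
matching turns `Tᶜ` into a subset of `T` through improving swaps, whence `T ≽ Tᶜ`.
-/

section NecDominates

/-- The context `X` is what lets dominations of disjoint pieces be combined. -/
def NecDominates {m : ℕ} (Rs : Fin m → Fin m → Prop) (A B : Finset (Fin m)) : Prop :=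
  ∀ R : Finset (Fin m) → Finset (Fin m) → Prop, IsPref R → Responsive Rs R →
    ∀ X, Disjoint X (A ∪ B) → R (X ∪ A) (X ∪ B)

variable {m : ℕ} {Rs : Fin m → Fin m → Prop} {R : Finset (Fin m) → Finset (Fin m) → Prop}

theorem IsPref.refl (hR : IsPref R) (A : Finset (Fin m)) : R A A :=
  (hR.1 A A).elim id id

theorem IsPref.trans (hR : IsPref R) {A B C : Finset (Fin m)} : R A B → R B C → R A C :=
  hR.2 A B C

theorem MonotonicPref.rel_union (hM : MonotonicPref R) (hR : IsPref R) (A C : Finset (Fin m)) :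
    R (A ∪ C) A := by
  induction C using Finset.induction_on with
  | empty => simpa using hR.refl A
  | insert x C _ ih => exact hR.trans (Finset.union_insert x A C ▸ hM (A ∪ C) x) ih

theorem MonotonicPref.rel_of_subset (hM : MonotonicPref R) (hR : IsPref R)
    {A B : Finset (Fin m)} (h : A ⊆ B) : R B A :=
  Finset.union_sdiff_of_subset h ▸ hM.rel_union hR A (B \ A)

theorem NecDominates.empty_right (A : Finset (Fin m)) : NecDominates Rs A ∅ :=
  fun _ hR hresp _ _ => hresp.1.rel_of_subset hR (by simp)

theorem NecDominates.mono_left {A A' B : Finset (Fin m)} (h : NecDominates Rs A B)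
    (hA : A ⊆ A') : NecDominates Rs A' B := by
  intro R hR hresp X hX
  exact hR.trans (hresp.1.rel_of_subset hR (Finset.union_subset_union_right hA))
    (h R hR hresp X (hX.mono_right (Finset.union_subset_union_left hA)))

theorem NecDominates.insert_insert {A B : Finset (Fin m)} {a b : Fin m}
    (h : NecDominates Rs A B) (hab : Rs a b) (ha : a ∉ A ∪ B) (hb : b ∉ B) (hne : a ≠ b) :
    NecDominates Rs (insert a A) (insert b B) := by
  intro R hR hresp X hX
  rw [Finset.disjoint_union_right, Finset.disjoint_insert_right, Finset.disjoint_insert_right]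
    at hX
  have hcontext : R (insert a X ∪ A) (insert a X ∪ B) :=
    h R hR hresp _ <| Finset.disjoint_insert_left.2
      ⟨ha, Finset.disjoint_union_right.2 ⟨hX.1.2, hX.2.2⟩⟩
  have hswap : R (insert a ((insert b (X ∪ B)).erase b)) (insert b (X ∪ B)) :=
    hresp.2 _ a b (by simp_all) (Finset.mem_insert_self b _) hab
  rw [Finset.erase_insert (by simp [hX.2.1, hb])] at hswap
  simp only [Finset.union_insert, Finset.insert_union] at hcontext hswap ⊢
  exact hR.trans hcontext hswap

theorem NecDominates.necAgreeable {T : Finset (Fin m)} (h : NecDominates Rs T Tᶜ) :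
    NecAgreeable Rs T := by
  intro R hR hresp _
  simpa using h R hR hresp ∅ (Finset.disjoint_empty_left _)

end NecDominates

section Pairing

open scoped List

variable {α : Type*} (r : α → α → Prop) [DecidableRel r]

def winner (b c : α) : α := if r b c then b else c

def loser (b c : α) : α := if r b c then c else b

/-- The winner of each pair is kept as the head of the rest of the list, so it sits right
before the next loser; this is the matching used for the sorting preference. -/
def keepWinners : List α → List α
  | a :: b :: c :: l => a :: keepWinners (winner r b c :: l)
  | l => l

def dropLosers : List α → List α
  | _ :: b :: c :: l => loser r b c :: dropLosers (winner r b c :: l)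
  | _ => []

variable {r}

theorem rel_winner_loser (htotal : ∀ x y, r x y ∨ r y x) (b c : α) :
    r (winner r b c) (loser r b c) := by
  unfold winner loser
  split_ifs with h
  · exact h
  · exact (htotal b c).resolve_left h

theorem winner_cons_sublist (b c : α) (l : List α) : winner r b c :: l <+ b :: c :: l := by
  unfold winner
  split_ifs
  · exact (List.sublist_cons_self c l).cons_cons b
  · exact List.sublist_cons_self b (c :: l)

theorem loser_mem (b c : α) (l : List α) : loser r b c ∈ b :: c :: l := by
  unfold loser
  split_ifs <;> simp

theorem perm_loser_winner_cons (a b c : α) (l : List α) :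
    a :: loser r b c :: winner r b c :: l ~ a :: b :: c :: l := by
  unfold winner loser
  split_ifs
  · exact (List.Perm.swap _ _ _).cons a
  · rfl

theorem keepWinners_cons (a : α) (l : List α) :
    keepWinners r (a :: l) = a :: (keepWinners r (a :: l)).tail := by
  match l with
  | [] | [_] | _ :: _ :: _ => simp [keepWinners]

theorem length_keepWinners_le (l : List α) : (keepWinners r l).length ≤ (l.length + 2) / 2 := by
  fun_induction keepWinners r l with
  | case1 a b c l ih => simp only [List.length_cons] at ih ⊢; omega
  | case2 l h =>
    match l with
    | [] | [_] | [_, _] => simp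
    | a :: b :: c :: t => exact absurd rfl (h a b c t)

theorem dropLosers_eq_nil {l : List α} (h : ∀ a b c t, l ≠ a :: b :: c :: t) :
    dropLosers r l = [] := by
  match l with
  | [] | [_] | [_, _] => simp [dropLosers]
  | a :: b :: c :: t => exact absurd rfl (h a b c t)

theorem perm_keepWinners_append_dropLosers (l : List α) :
    keepWinners r l ++ dropLosers r l ~ l := by
  fun_induction keepWinners r l with
  | case1 a b c l ih =>
    rw [dropLosers, List.cons_append]
    calc _ ~ a :: loser r b c :: (keepWinners r (winner r b c :: l) ++
            dropLosers r (winner r b c :: l)) := List.perm_middle.cons a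
      _ ~ a :: loser r b c :: winner r b c :: l := (ih.cons _).cons a
      _ ~ a :: b :: c :: l := perm_loser_winner_cons a b c l
  | case2 l h => simp [dropLosers_eq_nil h]

theorem mem_of_mem_keepWinners {x : α} {l : List α} (h : x ∈ keepWinners r l) : x ∈ l :=
  (perm_keepWinners_append_dropLosers l).subset (List.mem_append_left _ h)

theorem mem_of_mem_dropLosers {x : α} {l : List α} (h : x ∈ dropLosers r l) : x ∈ l :=
  (perm_keepWinners_append_dropLosers l).subset (List.mem_append_right _ h)

theorem compl_toFinset_keepWinners [Fintype α] [DecidableEq α] {l : List α} (hnd : l.Nodup)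
    (hl : ∀ x, x ∈ l) : (keepWinners r l).toFinsetᶜ = (dropLosers r l).toFinset := by
  have hperm := perm_keepWinners_append_dropLosers (r := r) l
  have hdisj := List.disjoint_of_nodup_append (hperm.nodup_iff.2 hnd)
  ext x
  have hx := hperm.mem_iff.2 (hl x)
  rw [List.mem_append] at hx
  rw [Finset.mem_compl, List.mem_toFinset, List.mem_toFinset]
  exact ⟨hx.resolve_left, fun h hk => hdisj hk h⟩

end Pairing

section Dominance

variable {m : ℕ} {r : Fin m → Fin m → Prop} [DecidableRel r]

theorem necDominates_keepWinners_dropLosers {Rs : Fin m → Fin m → Prop} {l : List (Fin m)}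
    (hnd : l.Nodup) (hl : l.Pairwise Rs) :
    NecDominates Rs (keepWinners r l).toFinset (dropLosers r l).toFinset := by
  fun_induction keepWinners r l with
  | case1 a b c l ih =>
    have hnd' := (perm_loser_winner_cons (r := r) a b c l).nodup_iff.2 hnd
    simp only [List.nodup_cons, List.mem_cons, not_or] at hnd'
    obtain ⟨⟨hao, haw, hal⟩, ⟨how, hol⟩, hwl, hl'⟩ := hnd'
    have ih' := ih (List.nodup_cons.2 ⟨hwl, hl'⟩) (hl.of_cons.sublist (winner_cons_sublist b c l))
    rw [dropLosers, List.toFinset_cons, List.toFinset_cons]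
    refine ih'.insert_insert (List.rel_of_pairwise_cons hl (loser_mem b c l)) ?_ ?_ hao
    · rw [Finset.mem_union, List.mem_toFinset, List.mem_toFinset]
      rintro (h | h)
      · simpa [haw, hal] using mem_of_mem_keepWinners h
      · simpa [haw, hal] using mem_of_mem_dropLosers h
    · rw [List.mem_toFinset]
      intro h
      simpa [how, hol] using mem_of_mem_dropLosers h
  | case2 l h => simpa [dropLosers_eq_nil h] using NecDominates.empty_right _

theorem necDominates_tail_keepWinners_dropLosers (htotal : ∀ x y, r x y ∨ r y x)
    {l : List (Fin m)} (hnd : l.Nodup) :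
    NecDominates r (keepWinners r l).tail.toFinset (dropLosers r l).toFinset := by
  fun_induction keepWinners r l with
  | case1 a b c l ih =>
    have hnd' := (perm_loser_winner_cons (r := r) a b c l).nodup_iff.2 hnd
    simp only [List.nodup_cons, List.mem_cons, not_or] at hnd'
    obtain ⟨-, ⟨how, hol⟩, hwl, hl'⟩ := hnd'
    have hwl' : (winner r b c :: l).Nodup := List.nodup_cons.2 ⟨hwl, hl'⟩
    have hw := (perm_keepWinners_append_dropLosers (r := r) _).nodup_iff.2 hwl'
    rw [keepWinners_cons, List.cons_append, List.nodup_cons] at hw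
    rw [dropLosers, List.toFinset_cons, List.tail_cons, keepWinners_cons, List.toFinset_cons]
    refine (ih hwl').insert_insert (rel_winner_loser htotal b c) ?_ ?_ (Ne.symm how)
    · simpa using hw.1
    · rw [List.mem_toFinset]
      intro h
      simpa [how, hol] using mem_of_mem_dropLosers h
  | case2 l h => simpa [dropLosers_eq_nil h] using NecDominates.empty_right _

end Dominance

/-- Two players with preferences on single items: there is a subset `T` of size at most
`⌈(m+1)/2⌉ = (m+2)/2` that is necessarily agreeable w.r.t. both. -/
theorem stmt_8 {m : ℕ} (Rs1 Rs2 : Fin m → Fin m → Prop)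
    (h1 : IsSingPref Rs1) (h2 : IsSingPref Rs2) :
    ∃ T : Finset (Fin m), T.card ≤ (m + 2) / 2 ∧
      NecAgreeable Rs1 T ∧ NecAgreeable Rs2 T := by
  classical
  have : Std.Total Rs1 := ⟨h1.1⟩
  have : IsTrans (Fin m) Rs1 := ⟨h1.2⟩
  set L := (List.finRange m).insertionSort Rs1
  have hperm : L.Perm (List.finRange m) := List.perm_insertionSort _ _
  have hnd : L.Nodup := hperm.nodup_iff.2 (List.nodup_finRange m)
  have hcompl := compl_toFinset_keepWinners (r := Rs2) hnd
    (fun x => hperm.mem_iff.2 (List.mem_finRange x))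
  refine ⟨(keepWinners Rs2 L).toFinset, ?_, ?_, ?_⟩
  · calc _ ≤ (keepWinners Rs2 L).length := List.toFinset_card_le _
      _ ≤ (L.length + 2) / 2 := length_keepWinners_le L
      _ = (m + 2) / 2 := by rw [hperm.length_eq, List.length_finRange]
  · exact (hcompl ▸ necDominates_keepWinners_dropLosers hnd
      (List.pairwise_insertionSort _ _)).necAgreeable
  · exact (hcompl ▸ (necDominates_tail_keepWinners_dropLosers h2.1 hnd).mono_left fun _ hx =>
      List.mem_toFinset.2 (List.mem_of_mem_tail (List.mem_toFinset.1 hx))).necAgreeable
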